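/- arXiv:1912.12153 — 6 statements merged into one kernel-verified Lean document; each statement's English description precedes it below -/
import Mathlib

section
/- Let λ : [0,∞) → [0,∞) be a decreasing function with ∫₀^∞ √(λ(t)) dt < ∞. Then the function t ↦ t·λ(t) is integrable on [0,∞). -/
/-!
Since `√λ` is decreasing, `t √λ(t) ≤ ∫₀ᵗ √λ ≤ C := ∫₀^∞ √λ`. Hence
`t λ(t) = (t √λ(t)) √λ(t) ≤ C √λ(t)`, which is integrable.
-/

open MeasureTheory Set

theorem sub_mul_le_setIntegral_Ici_of_antitoneOn {f : ℝ → ℝ} {a t : ℝ}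
    (hf : AntitoneOn f (Ici a)) (hf0 : ∀ s, a ≤ s → 0 ≤ f s) (hint : IntegrableOn f (Ici a))
    (ht : a ≤ t) : (t - a) * f t ≤ ∫ s in Ici a, f s := by
  have hsub : Ioc a t ⊆ Ici a := fun _ hs => hs.1.le
  calc (t - a) * f t = ∫ _ in Ioc a t, f t := by
        rw [setIntegral_const, Real.volume_real_Ioc_of_le ht, smul_eq_mul]
    _ ≤ ∫ s in Ioc a t, f s :=
        setIntegral_mono_on (integrableOn_const (by simp)) (hint.mono_set hsub) measurableSet_Ioc
          fun s hs => hf (hsub hs) ht hs.2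
    _ ≤ ∫ s in Ici a, f s :=
        setIntegral_mono_set hint
          ((ae_restrict_mem measurableSet_Ici).mono hf0) hsub.eventuallyLE

theorem integrable_t_mul_lambda
    (lam : ℝ → ℝ)
    (hnonneg : ∀ t, 0 ≤ t → 0 ≤ lam t)
    (hmono : AntitoneOn lam (Set.Ici (0:ℝ)))
    (hint : MeasureTheory.IntegrableOn (fun t => Real.sqrt (lam t)) (Set.Ici (0:ℝ))) :
    MeasureTheory.IntegrableOn (fun t => t * lam t) (Set.Ici (0:ℝ)) := by
  set C := ∫ t in Ici (0:ℝ), Real.sqrt (lam t)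
  have hsqrt : AntitoneOn (fun t => Real.sqrt (lam t)) (Ici 0) :=
    fun s hs t ht hst => Real.sqrt_le_sqrt (hmono hs ht hst)
  have hbound : ∀ t, 0 ≤ t → t * Real.sqrt (lam t) ≤ C := fun t ht => by
    simpa using sub_mul_le_setIntegral_Ici_of_antitoneOn hsqrt
      (fun s _ => Real.sqrt_nonneg _) hint ht
  have hmeas : AEStronglyMeasurable (fun t => t * lam t) (volume.restrict (Ici (0:ℝ))) :=
    (aemeasurable_id.mul (aemeasurable_restrict_of_antitoneOn measurableSet_Ici hmono))
      |>.aestronglyMeasurable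
  refine (hint.const_mul C).mono' hmeas ?_
  filter_upwards [ae_restrict_mem measurableSet_Ici] with t (ht : 0 ≤ t)
  calc ‖t * lam t‖ = t * Real.sqrt (lam t) * Real.sqrt (lam t) := by
        rw [mul_assoc, Real.mul_self_sqrt (hnonneg t ht), Real.norm_of_nonneg
          (mul_nonneg ht (hnonneg t ht))]
    _ ≤ C * Real.sqrt (lam t) := mul_le_mul_of_nonneg_right (hbound t ht) (Real.sqrt_nonneg _)
end

section
/- Let (a_k), (b_k), (c_k) be sequences of positive reals with (c_k) increasing. If for every k ≥ 1, a_k² ≤ c_k + Σ_{j=1}^{k-1} b_j a_{j+1}, then for every k, max_{j=1,…,k} a_j ≤ √(c_k) + Σ_{j=1}^{k-1} b_j. -/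
/-!
Let `a m` be the largest of `a 1, …, a k`. Bounding every `a (j + 1)` in the recursion at `m`
by `a m` gives `a m ^ 2 ≤ c m + B * a m` with `B = ∑_{j < m} b j`, and such a quadratic
inequality forces `a m ≤ √(c m) + B`; monotonicity of `c` and positivity of `b` then pass
from `m` to `k`.
-/

open Finset

/-- If `x ≤ B` this is clear; otherwise `(x - B)² ≤ x (x - B) ≤ C`. -/
theorem le_sqrt_add_of_sq_le_add_mul {x B C : ℝ} (hB : 0 ≤ B) (h : x ^ 2 ≤ C + B * x) :
    x ≤ √C + B := by
  rcases le_or_gt x B with hxB | hBx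
  · linarith [Real.sqrt_nonneg C]
  · have : (x - B) ^ 2 ≤ C := by nlinarith
    linarith [le_abs_self (x - B), Real.abs_le_sqrt this]

theorem sum_mul_le_sum_mul_of_le {ι : Type*} {s : Finset ι} {b f : ι → ℝ} {M : ℝ}
    (hb : ∀ i ∈ s, 0 ≤ b i) (hf : ∀ i ∈ s, f i ≤ M) :
    ∑ i ∈ s, b i * f i ≤ (∑ i ∈ s, b i) * M := by
  rw [sum_mul]
  exact sum_le_sum fun i hi => mul_le_mul_of_nonneg_left (hf i hi) (hb i hi)

theorem max_bound_of_quadratic_recursion_general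
    (a b c : ℕ → ℝ)
    (hb : ∀ k, 1 ≤ k → 0 < b k)
    (hcmono : ∀ k l, 1 ≤ k → k ≤ l → c k ≤ c l)
    (hrec : ∀ k, 1 ≤ k → (a k) ^ 2 ≤ c k + ∑ j ∈ Finset.Icc 1 (k - 1), b j * a (j + 1)) :
    ∀ k, 1 ≤ k → ∀ j, 1 ≤ j → j ≤ k →
      a j ≤ Real.sqrt (c k) + ∑ j ∈ Finset.Icc 1 (k - 1), b j := by
  intro k hk j hj hjk
  have hb₀ : ∀ n, ∀ i ∈ Icc 1 n, 0 ≤ b i := fun n i hi => (hb i (mem_Icc.mp hi).1).le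
  obtain ⟨m, hm, hmax⟩ := exists_max_image (Icc 1 k) a ⟨1, by simp [hk]⟩
  obtain ⟨hm1, hmk⟩ := mem_Icc.mp hm
  have hsq : a m ^ 2 ≤ c m + (∑ i ∈ Icc 1 (m - 1), b i) * a m :=
    (hrec m hm1).trans <| add_le_add_right
      (sum_mul_le_sum_mul_of_le (hb₀ _) fun i hi => hmax (i + 1) (by grind)) _
  calc a j ≤ a m := hmax j (mem_Icc.mpr ⟨hj, hjk⟩)
    _ ≤ √(c m) + ∑ i ∈ Icc 1 (m - 1), b i :=
      le_sqrt_add_of_sq_le_add_mul (sum_nonneg (hb₀ _)) hsq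
    _ ≤ √(c k) + ∑ i ∈ Icc 1 (k - 1), b i :=
      add_le_add (Real.sqrt_le_sqrt (hcmono m k hm1 hmk))
        (sum_le_sum_of_subset_of_nonneg (Icc_subset_Icc_right (by omega)) fun i hi _ => hb₀ _ i hi)

theorem max_bound_of_quadratic_recursion
    (a b c : ℕ → ℝ)
    (ha : ∀ k, 1 ≤ k → 0 < a k) (hb : ∀ k, 1 ≤ k → 0 < b k)
    (hc : ∀ k, 1 ≤ k → 0 < c k)
    (hcmono : ∀ k l, 1 ≤ k → k ≤ l → c k ≤ c l)
    (hrec : ∀ k, 1 ≤ k → (a k) ^ 2 ≤ c k + ∑ j ∈ Finset.Icc 1 (k - 1), b j * a (j + 1)) :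
    ∀ k, 1 ≤ k → ∀ j, 1 ≤ j → j ≤ k →
      a j ≤ Real.sqrt (c k) + ∑ j ∈ Finset.Icc 1 (k - 1), b j :=
  max_bound_of_quadratic_recursion_general a b c hb hcmono hrec
end

section
/- For y > 0, the Fenchel conjugate of the function kl_y : ℝ → (−∞,∞], kl_y(t) = y log(y/t) − y + t for t > 0 and +∞ otherwise, is given by kl_y*(w) = −y·log(1−w) if w < 1 and +∞ otherwise. -/
theorem kl_conjugate_formula (y : ℝ) (hy : 0 < y)
    (kly : ℝ → EReal)
    (hkly : ∀ t : ℝ, kly t =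
      if 0 < t then ((y * Real.log (y / t) - y + t : ℝ) : EReal) else ⊤) :
    ∀ w : ℝ, (⨆ t : ℝ, ((w * t : ℝ) : EReal) - kly t) =
      if w < 1 then (((-y) * Real.log (1 - w) : ℝ) : EReal) else ⊤ := by
  intro w
  have hkey : ∀ t : ℝ, 0 < t → ((w * t : ℝ) : EReal) - kly t
      = ((w * t - (y * Real.log (y / t) - y + t) : ℝ) : EReal) := by
    intro t ht
    rw [hkly t, if_pos ht, ← EReal.coe_sub]
  split_ifs with hw
  · have h1w : 0 < 1 - w := by linarith
    apply le_antisymm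
    · apply iSup_le
      intro t
      rcases le_or_gt t 0 with ht | ht
      · rw [hkly t, if_neg (not_lt.mpr ht)]
        simp
      · rw [hkey t ht]
        apply EReal.coe_le_coe_iff.mpr
        have hu : 0 < t * (1 - w) / y := by positivity
        have hlog := Real.log_le_sub_one_of_pos hu
        rw [Real.log_div (by positivity) hy.ne', Real.log_mul ht.ne' h1w.ne'] at hlog
        have hc : y * (t * (1 - w) / y) = t * (1 - w) := by
          field_simp
        rw [Real.log_div hy.ne' ht.ne']
        nlinarith [mul_le_mul_of_nonneg_left hlog hy.le, hc]
    · have ht : 0 < y / (1 - w) := div_pos hy h1w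
      have hval : ((w * (y / (1 - w)) - (y * Real.log (y / (y / (1 - w))) - y + y / (1 - w)) : ℝ) : EReal)
          = (((-y) * Real.log (1 - w) : ℝ) : EReal) := by
        have h2 : y / (y / (1 - w)) = 1 - w := by
          field_simp
        rw [h2]
        norm_cast
        field_simp
        ring
      calc (((-y) * Real.log (1 - w) : ℝ) : EReal)
          = ((w * (y / (1 - w)) : ℝ) : EReal) - kly (y / (1 - w)) := by
            rw [hkey _ ht, hval]
        _ ≤ ⨆ t : ℝ, ((w * t : ℝ) : EReal) - kly t := le_iSup (fun t : ℝ => ((w * t : ℝ) : EReal) - kly t) (y / (1 - w))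
  · rw [iSup_eq_top]
    intro b hb
    obtain ⟨r, hbr, -⟩ := EReal.exists_between_coe_real hb
    refine ⟨Real.exp ((r - y + y * Real.log y) / y), ?_⟩
    apply hbr.trans_le
    rw [hkey _ (Real.exp_pos _)]
    apply EReal.coe_le_coe_iff.mpr
    set t := Real.exp ((r - y + y * Real.log y) / y) with htdef
    have ht : 0 < t := Real.exp_pos _
    have hlogt : Real.log t = (r - y + y * Real.log y) / y := Real.log_exp _
    have hyl : y * Real.log t = r - y + y * Real.log y := by
      rw [hlogt]; field_simp
    rw [Real.log_div hy.ne' ht.ne']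
    have hw1 : 1 ≤ w := le_of_not_gt hw
    nlinarith [hyl, ht]
end

section
/- Let y > 0, τ > 0, λ > 0. The proximal operator of (τ/λ)·kl_y (the one-dimensional KL divergence in its second argument) at u ∈ ℝ is given by prox_{(τ/λ) kl_y}(u) = (1/2)( u − τ/λ + √((u − τ/λ)² + 4(τ/λ) y) ). -/
lemma prox_kl_key (η y u p t : ℝ) (hη : 0 < η) (hy : 0 < y) (hp0 : 0 < p) (ht : 0 < t)
    (hquad : η * y = p * (p + η - u)) :
    y * Real.log (y / p) - y + p + 1 / (2 * η) * (p - u) ^ 2 + (t - p) ^ 2 / (2 * η) ≤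
      y * Real.log (y / t) - y + t + 1 / (2 * η) * (t - u) ^ 2 := by
  have hl := Real.log_le_sub_one_of_pos (div_pos ht hp0)
  rw [Real.log_div ht.ne' hp0.ne'] at hl
  have h1 : y * Real.log t - y * Real.log p ≤ y * (t / p - 1) := by
    nlinarith [mul_le_mul_of_nonneg_left hl hy.le]
  have h2 : y * (t / p - 1) = (t - p) * (p + η - u) / η := by
    have hyv : y = p * (p + η - u) / η := by field_simp; linarith [hquad]
    rw [hyv]; field_simp
  have h3 : (t - p) * (p + η - u) / η =
      t - p + 1 / (2 * η) * (t - u) ^ 2 - 1 / (2 * η) * (p - u) ^ 2 - (t - p) ^ 2 / (2 * η) := by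
    field_simp; ring
  rw [Real.log_div hy.ne' hp0.ne', Real.log_div hy.ne' ht.ne']
  nlinarith [h1, h2, h3]

theorem prox_kl_formula (y τ lam : ℝ) (hy : 0 < y) (hτ : 0 < τ) (hlam : 0 < lam)
    (kly : ℝ → EReal)
    (hkly : ∀ t : ℝ, kly t =
      if 0 < t then ((y * Real.log (y / t) - y + t : ℝ) : EReal) else ⊤)
    (u p : ℝ)
    (hp : p = (1 / 2) * (u - τ / lam + Real.sqrt ((u - τ / lam) ^ 2 + 4 * (τ / lam) * y))) :
    (∀ t : ℝ,
        kly p + (((1 / (2 * (τ / lam))) * (p - u) ^ 2 : ℝ) : EReal) ≤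
          kly t + (((1 / (2 * (τ / lam))) * (t - u) ^ 2 : ℝ) : EReal)) ∧
    (∀ t : ℝ, t ≠ p →
        kly p + (((1 / (2 * (τ / lam))) * (p - u) ^ 2 : ℝ) : EReal) <
          kly t + (((1 / (2 * (τ / lam))) * (t - u) ^ 2 : ℝ) : EReal)) := by
  set η := τ / lam with hηd
  have hη : 0 < η := div_pos hτ hlam
  set s := Real.sqrt ((u - η) ^ 2 + 4 * η * y) with hsd
  have hrad : 0 ≤ (u - η) ^ 2 + 4 * η * y := by positivity
  have hs2 : s ^ 2 = (u - η) ^ 2 + 4 * η * y := Real.sq_sqrt hrad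
  have hsnn : 0 ≤ s := Real.sqrt_nonneg _
  have hp0 : 0 < p := by
    rw [hp]
    nlinarith [hs2, hsnn, mul_pos hη hy]
  have hquad : η * y = p * (p + η - u) := by
    rw [hp]; nlinarith [hs2]
  have main : ∀ t : ℝ, 0 < t →
      y * Real.log (y / p) - y + p + 1 / (2 * η) * (p - u) ^ 2 + (t - p) ^ 2 / (2 * η) ≤
        y * Real.log (y / t) - y + t + 1 / (2 * η) * (t - u) ^ 2 :=
    fun t ht => prox_kl_key η y u p t hη hy hp0 ht hquad
  constructor
  · intro t
    by_cases ht : 0 < t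
    · rw [hkly p, hkly t, if_pos hp0, if_pos ht, ← EReal.coe_add, ← EReal.coe_add,
        EReal.coe_le_coe_iff]
      have := main t ht
      have hsq : 0 ≤ (t - p) ^ 2 / (2 * η) := by positivity
      linarith
    · rw [hkly p, hkly t, if_pos hp0, if_neg ht, ← EReal.coe_add, EReal.top_add_coe]
      exact le_top
  · intro t htp
    by_cases ht : 0 < t
    · rw [hkly p, hkly t, if_pos hp0, if_pos ht, ← EReal.coe_add, ← EReal.coe_add,
        EReal.coe_lt_coe_iff]
      have := main t ht
      have hsq : 0 < (t - p) ^ 2 / (2 * η) := by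
        have : t - p ≠ 0 := sub_ne_zero.2 htp
        positivity
      linarith
    · rw [hkly p, hkly t, if_pos hp0, if_neg ht, ← EReal.coe_add, EReal.top_add_coe]
      exact EReal.coe_lt_top _
end

section
/- Let y > 0, τ > 0, λ > 0, and let f(w) := kl_y*(λ w) = −y log(1−λw) for λw < 1. Then prox_{(τ/λ) f}(w) = (1/(2λ))[ (1+λw) − √((1−λw)² + 4λτ y) ] for every w ∈ ℝ. -/
theorem prox_kl_conjugate_formula (y τ lam : ℝ) (hy : 0 < y) (hτ : 0 < τ) (hlam : 0 < lam)
    (f : ℝ → EReal)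
    (hf : ∀ v : ℝ, f v =
      if lam * v < 1 then (((-y) * Real.log (1 - lam * v) : ℝ) : EReal) else ⊤)
    (w p : ℝ)
    (hp : p = (1 / (2 * lam)) *
      ((1 + lam * w) - Real.sqrt ((1 - lam * w) ^ 2 + 4 * lam * τ * y))) :
    (∀ v : ℝ,
        f p + (((1 / (2 * (τ / lam))) * (p - w) ^ 2 : ℝ) : EReal) ≤
          f v + (((1 / (2 * (τ / lam))) * (v - w) ^ 2 : ℝ) : EReal)) ∧
    (∀ v : ℝ, v ≠ p →
        f p + (((1 / (2 * (τ / lam))) * (p - w) ^ 2 : ℝ) : EReal) <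
          f v + (((1 / (2 * (τ / lam))) * (v - w) ^ 2 : ℝ) : EReal)) := by
  have hc : (1 : ℝ) / (2 * (τ / lam)) = lam / (2 * τ) := by
    field_simp
  set D := Real.sqrt ((1 - lam * w) ^ 2 + 4 * lam * τ * y) with hD
  have hDnn : 0 ≤ D := Real.sqrt_nonneg _
  have harg : 0 ≤ (1 - lam * w) ^ 2 + 4 * lam * τ * y := by positivity
  have hD2 : D ^ 2 = (1 - lam * w) ^ 2 + 4 * lam * τ * y := Real.sq_sqrt harg
  have hpos : 0 < lam * τ * y := by positivity
  -- 1 - lam * p = (1 - lam*w + D)/2 > 0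
  have h1 : 1 - lam * p = (1 - lam * w + D) / 2 := by
    rw [hp]; field_simp; ring
  have ha : 0 < 1 - lam * p := by
    rw [h1]; nlinarith [hD2, hDnn, hpos]
  have hplt : lam * p < 1 := by linarith
  -- first-order condition
  have hpw : p - w = ((1 - lam * w) - D) / (2 * lam) := by
    rw [hp]; field_simp; ring
  have hkey : (p - w) * (1 - lam * p) = -(y * τ) := by
    rw [hpw, h1]
    field_simp
    nlinarith [hD2]
  -- main real inequality
  have main : ∀ v : ℝ, lam * v < 1 → v ≠ p →
      (-y) * Real.log (1 - lam * p) + lam / (2 * τ) * (p - w) ^ 2 <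
      (-y) * Real.log (1 - lam * v) + lam / (2 * τ) * (v - w) ^ 2 := by
    intro v hv hvp
    have hb : 0 < 1 - lam * v := by linarith
    have hlog : Real.log (1 - lam * v) - Real.log (1 - lam * p) ≤
        (1 - lam * v) / (1 - lam * p) - 1 := by
      rw [← Real.log_div hb.ne' ha.ne']
      exact Real.log_le_sub_one_of_pos (div_pos hb ha)
    have hvp2 : 0 < (v - p) ^ 2 := by
      have : v - p ≠ 0 := sub_ne_zero.mpr hvp
      positivity
    have hid : lam / (2 * τ) * ((v - w) ^ 2 - (p - w) ^ 2) * (1 - lam * p) -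
        y * ((1 - lam * v) - (1 - lam * p)) =
        lam / (2 * τ) * (1 - lam * p) * (v - p) ^ 2 := by
      have hτ' : (τ : ℝ) ≠ 0 := hτ.ne'
      field_simp
      linear_combination (2 * lam * (v - p)) * hkey
    have hidpos : 0 < lam / (2 * τ) * (1 - lam * p) * (v - p) ^ 2 := by positivity
    have key : y * ((1 - lam * v) / (1 - lam * p) - 1) <
        lam / (2 * τ) * ((v - w) ^ 2 - (p - w) ^ 2) := by
      have h2 : y * ((1 - lam * v) / (1 - lam * p) - 1) =
          (y * ((1 - lam * v) - (1 - lam * p))) / (1 - lam * p) := by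
        field_simp
      rw [h2, div_lt_iff₀ ha]
      nlinarith [hid, hidpos]
    have hmul : y * (Real.log (1 - lam * v) - Real.log (1 - lam * p)) ≤
        y * ((1 - lam * v) / (1 - lam * p) - 1) :=
      mul_le_mul_of_nonneg_left hlog hy.le
    linarith [hmul, key]
  have hfp : f p = (((-y) * Real.log (1 - lam * p) : ℝ) : EReal) := by
    rw [hf p, if_pos hplt]
  have strict : ∀ v : ℝ, v ≠ p →
      f p + (((1 / (2 * (τ / lam))) * (p - w) ^ 2 : ℝ) : EReal) <
        f v + (((1 / (2 * (τ / lam))) * (v - w) ^ 2 : ℝ) : EReal) := by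
    intro v hvp
    rw [hfp, hf v, hc]
    by_cases hv : lam * v < 1
    · rw [if_pos hv, ← EReal.coe_add, ← EReal.coe_add, EReal.coe_lt_coe_iff]
      exact main v hv hvp
    · rw [if_neg hv, ← EReal.coe_add, EReal.top_add_coe]
      exact EReal.coe_lt_top _
  refine ⟨fun v => ?_, strict⟩
  by_cases hvp : v = p
  · subst hvp; exact le_refl _
  · exact (strict v hvp).le
end

section
/- Let w ∈ ℝ and ȳ, ŷ > 0. If there exists e ∈ ℝ with |e| ≤ ε such that prox_{kl*_ŷ}(w) = prox_{kl*_ȳ}(w + e), then ε ≥ 2|ŷ − ȳ| / ((1−w) + √((1−w)² + 4ŷ)). In particular, the smallest such ε tends to +∞ as w → +∞ when ŷ ≠ ȳ. -/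
theorem kl_not_type3_error
    (w ybar yhat : ℝ) (hybar : 0 < ybar) (hyhat : 0 < yhat)
    (prox : ℝ → ℝ → ℝ)
    (hprox : ∀ y v : ℝ, prox y v = (1 / 2) * ((1 + v) - Real.sqrt ((1 - v) ^ 2 + 4 * y)))
    (ε e : ℝ) (he : |e| ≤ ε)
    (happrox : prox yhat w = prox ybar (w + e)) :
    2 * |yhat - ybar| / ((1 - w) + Real.sqrt ((1 - w) ^ 2 + 4 * yhat)) ≤ ε := by
  set S := Real.sqrt ((1 - w) ^ 2 + 4 * yhat) with hSdef
  set T := Real.sqrt ((1 - (w + e)) ^ 2 + 4 * ybar) with hTdef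
  have hSnn : 0 ≤ S := Real.sqrt_nonneg _
  have hTnn : 0 ≤ T := Real.sqrt_nonneg _
  have hS : S ^ 2 = (1 - w) ^ 2 + 4 * yhat := Real.sq_sqrt (by positivity)
  have hT : T ^ 2 = (1 - (w + e)) ^ 2 + 4 * ybar := Real.sq_sqrt (by positivity)
  rw [hprox, hprox] at happrox
  have hTe : T = S + e := by linarith
  have h' : (S + e) ^ 2 = (1 - (w + e)) ^ 2 + 4 * ybar := by rw [← hTe]; exact hT
  have heq : e * ((1 - w) + S) = 2 * (ybar - yhat) := by
    linear_combination (1/2) * h' - (1/2) * hS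
  have hD : 0 < (1 - w) + S := by nlinarith [hS, hSnn, hyhat, sq_nonneg (S + (1 - w))]
  have habs : |e| * ((1 - w) + S) = 2 * |yhat - ybar| := by
    have := abs_mul e ((1 - w) + S)
    rw [heq, abs_of_pos hD] at this
    rw [← this, abs_mul]
    simp [abs_sub_comm yhat ybar]
  rw [div_le_iff₀ hD, ← habs]
  exact mul_le_mul_of_nonneg_right he hD.le
end
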